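/- arXiv:2210.07236 — 5 statements merged into one kernel-verified Lean document; each statement's English description precedes it below -/
import Mathlib

section
/- Any continuous piecewise linear function p : ℝⁿ → ℝ with q pieces can be exactly represented by a ReLU network whose number of layers l, maximum width w, and number of hidden neurons h satisfy l ≤ 2⌈log₂ q⌉ + 1, w ≤ 𝟙[q > 1]·⌈3q/2⌉·q, and h ≤ (3·2^⌈log₂ q⌉ + 2⌈log₂ q⌉ − 3)·q + 3·2^⌈log₂ q⌉ − 2⌈log₂ q⌉ − 3. -/
noncomputable section

/-- The ReLU activation function. -/
def relu (x : ℝ) : ℝ := max 0 x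

/-- A ReLU network with `hidden` hidden layers (i.e. `hidden + 1` layers in total),
layer dimensions `k 0, k 1, …, k (hidden + 1)`, weight matrices `W i` and biases `b i`. -/
structure ReLUNet where
  hidden : ℕ
  k : ℕ → ℕ
  W : (i : ℕ) → Matrix (Fin (k (i + 1))) (Fin (k i)) ℝ
  b : (i : ℕ) → Fin (k (i + 1)) → ℝ

namespace ReLUNet

/-- The output of the `(i+1)`-st affine layer: `h 1 (x) = W 1 x + b 1` and
`h (i+1) (x) = W (i+1) σ (h i (x)) + b (i+1)`. -/
def layerOut (N : ReLUNet) : (i : ℕ) → (Fin (N.k 0) → ℝ) → Fin (N.k (i + 1)) → ℝ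
  | 0, x => (N.W 0).mulVec x + N.b 0
  | i + 1, x => (N.W (i + 1)).mulVec (fun j => relu (N.layerOut i x j)) + N.b (i + 1)

/-- The input-output function of the network. -/
def eval (N : ReLUNet) : (Fin (N.k 0) → ℝ) → Fin (N.k (N.hidden + 1)) → ℝ :=
  N.layerOut N.hidden

/-- The number of layers of the network. -/
def depth (N : ReLUNet) : ℕ := N.hidden + 1

/-- The number of hidden neurons of the network. -/
def numHiddenNeurons (N : ReLUNet) : ℕ := ∑ i ∈ Finset.Icc 1 N.hidden, N.k i

/-- The maximum width (maximum number of neurons over all hidden layers; `0` if none). -/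
def maxWidth (N : ReLUNet) : ℕ := (Finset.Icc 1 N.hidden).sup N.k

/-- The network `N` exactly represents the function `f : ℝⁿ → ℝᵐ`. -/
def Computes (N : ReLUNet) {n m : ℕ} (f : (Fin n → ℝ) → Fin m → ℝ) : Prop :=
  ∃ (h0 : N.k 0 = n) (h1 : N.k (N.hidden + 1) = m),
    ∀ (x : Fin n → ℝ) (j : Fin (N.k (N.hidden + 1))),
      N.eval (fun i => x (Fin.cast h0 i)) j = f x (Fin.cast h1 j)

/-- The network `N` exactly represents the scalar-valued function `f : ℝⁿ → ℝ`. -/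
def ComputesScalar (N : ReLUNet) {n : ℕ} (f : (Fin n → ℝ) → ℝ) : Prop :=
  N.Computes fun x (_ : Fin 1) => f x

end ReLUNet

/-- `f : ℝⁿ → ℝ` is an affine function. -/
def IsAffineFn {n : ℕ} (f : (Fin n → ℝ) → ℝ) : Prop :=
  ∃ (a : Fin n → ℝ) (c : ℝ), ∀ x, f x = (∑ i, a i * x i) + c

/-- `p` agrees with some affine function on the set `X`. -/
def AffineOnSet {n : ℕ} (p : (Fin n → ℝ) → ℝ) (X : Set (Fin n → ℝ)) : Prop :=
  ∃ f, IsAffineFn f ∧ ∀ x ∈ X, p x = f x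

/-- `X` is a finite family of closed subsets of `ℝⁿ` covering `ℝⁿ` on each of which `p` is
affine (the CPWL definition). -/
def IsCPWLFamily {n I : ℕ} (p : (Fin n → ℝ) → ℝ) (X : Fin I → Set (Fin n → ℝ)) : Prop :=
  (∀ i, IsClosed (X i)) ∧ (⋃ i, X i) = Set.univ ∧ ∀ i, AffineOnSet p (X i)

/-- A family of pieces: closed convex subsets satisfying the CPWL definition. -/
def IsPieceFamily {n I : ℕ} (p : (Fin n → ℝ) → ℝ) (X : Fin I → Set (Fin n → ℝ)) : Prop :=
  IsCPWLFamily p X ∧ ∀ i, Convex ℝ (X i)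

/-- `p` is CPWL with (minimum) number of pieces `q`. -/
def HasPieces {n : ℕ} (p : (Fin n → ℝ) → ℝ) (q : ℕ) : Prop :=
  (∃ X : Fin q → Set (Fin n → ℝ), IsPieceFamily p X) ∧
  ∀ (q' : ℕ) (X : Fin q' → Set (Fin n → ℝ)), IsPieceFamily p X → q ≤ q'

/-- A family of closed subsets satisfying the CPWL definition with minimum cardinality. -/
def IsMinimalClosedFamily {n I : ℕ} (p : (Fin n → ℝ) → ℝ)
    (X : Fin I → Set (Fin n → ℝ)) : Prop :=
  IsCPWLFamily p X ∧
  ∀ (I' : ℕ) (Y : Fin I' → Set (Fin n → ℝ)), IsCPWLFamily p Y → I ≤ I'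

/-- `f` is a linear component of `p`: `f` is affine and agrees with `p` on the union of a
nonempty subfamily of a minimal family of closed subsets satisfying the CPWL definition. -/
def IsLinearComponent {n : ℕ} (p f : (Fin n → ℝ) → ℝ) : Prop :=
  IsAffineFn f ∧
  ∃ (I : ℕ) (X : Fin I → Set (Fin n → ℝ)), IsMinimalClosedFamily p X ∧
    ∃ M : Finset (Fin I), M.Nonempty ∧ ∀ i ∈ M, ∀ x ∈ X i, f x = p x

/-- `p` has exactly `k` distinct linear components. -/
def HasLinearComponents {n : ℕ} (p : (Fin n → ℝ) → ℝ) (k : ℕ) : Prop :=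
  {f | IsLinearComponent p f}.Finite ∧ {f | IsLinearComponent p f}.ncard = k

/-- `φ(n, k) = min (∑_{i=0}^n C((k² − k)/2, i), k!)`. -/
def phi (n k : ℕ) : ℕ :=
  min (∑ i ∈ Finset.range (n + 1), Nat.choose ((k ^ 2 - k) / 2) i) (Nat.factorial k)

/-- A family of closed connected subsets of `ℝⁿ` covering `ℝⁿ` on each of which `p` is affine. -/
def IsConnFamily {n I : ℕ} (p : (Fin n → ℝ) → ℝ) (X : Fin I → Set (Fin n → ℝ)) : Prop :=
  (∀ i, IsClosed (X i)) ∧ (∀ i, IsConnected (X i)) ∧ (⋃ i, X i) = Set.univ ∧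
    ∀ i, AffineOnSet p (X i)

/-- A family of closed connected subsets satisfying the CPWL definition whose cardinality is
minimal among all such families (Assumption 1). -/
def IsMinConnFamily {n I : ℕ} (p : (Fin n → ℝ) → ℝ) (X : Fin I → Set (Fin n → ℝ)) : Prop :=
  IsConnFamily p X ∧
  ∀ (I' : ℕ) (Y : Fin I' → Set (Fin n → ℝ)), IsConnFamily p Y → I ≤ I'

/-- The sequence `r` from the paper: `r 1 = 0`, `r k = 3k/2 + r (k/2)` for even `k`, and
`r k = 2 + 3(k−1)/2 + r ((k+1)/2)` for odd `k ≠ 1`. -/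
def rseq : ℕ → ℕ
  | 0 => 0
  | 1 => 0
  | k + 2 =>
    if (k + 2) % 2 = 0 then 3 * ((k + 2) / 2) + rseq ((k + 2) / 2)
    else 2 + 3 * ((k + 1) / 2) + rseq ((k + 3) / 2)
  decreasing_by all_goals omega

end

/-!
On each convex piece `X i` the function `p` agrees with an affine map `f i`, and `p` is
Lipschitz because it is affine on each set of a finite closed cover. Lipschitz continuity keeps
the separating hyperplane between `{(x - y, t) | x ∈ X i, y ∈ X j, t ≤ f i x - f j y}` and the
cone above the graph of `L ‖·‖` non-vertical, which yields an affine `g i j` with `f i ≤ g i j`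
on `X i` and `g i j ≤ f j` on `X j`. Then `p = max_i min_j g i j`.

This max-min is computed by balanced reduction trees: one hidden layer turns `m` values into
`⌈m/2⌉` using `⌈3m/2⌉` neurons, via `max a b = a + relu (b - a)` for each pair and
`a = relu a - relu (-a)` for each first entry. Running `q` min-trees in parallel and then one
max-tree gives `2 ⌈log₂ q⌉` hidden layers of width at most `q ⌈3q/2⌉`, and the total number of
neurons is at most `(q + 1) (3 · 2^⌈log₂ q⌉ - 3)`.
-/

open Set Filter Topology NNReal

theorem eventually_exists_mem_and_mem {E ι : Type*} [TopologicalSpace E] [Finite ι]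
    {X : ι → Set E} (hX : ∀ i, IsClosed (X i)) (hcov : ⋃ i, X i = univ) (z : E) :
    ∀ᶠ w in 𝓝 z, ∃ i, z ∈ X i ∧ w ∈ X i := by
  have hopen : IsOpen (⋂ i ∈ {i | z ∉ X i}, (X i)ᶜ) :=
    (toFinite _).isOpen_biInter fun i _ => (hX i).isOpen_compl
  filter_upwards [hopen.mem_nhds (mem_iInter₂.2 fun i hi => hi)] with w hw
  obtain ⟨i, hi⟩ := mem_iUnion.1 (hcov ▸ mem_univ w : w ∈ ⋃ i, X i)
  exact ⟨i, not_not.1 fun hz => mem_iInter₂.1 hw i hz hi, hi⟩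

theorem lipschitzWith_of_eventually_dist_le {E β : Type*} [NormedAddCommGroup E]
    [NormedSpace ℝ E] [PseudoMetricSpace β] {f : E → β} {K : ℝ≥0}
    (h : ∀ z, ∀ᶠ w in 𝓝 z, dist (f w) (f z) ≤ K * dist w z) : LipschitzWith K f := by
  have hcont : Continuous f := continuous_iff_continuousAt.2 fun z => by
    obtain ⟨r, hr, hball⟩ := Metric.eventually_nhds_iff.1 (h z)
    exact continuousAt_of_locally_lipschitz hr K fun w hw => hball hw
  refine LipschitzWith.of_dist_le_mul fun y x => ?_
  -- continuous induction along the segment from `x` to `y`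
  let γ := AffineMap.lineMap (k := ℝ) x y
  have hγ : Continuous γ := AffineMap.lineMap_continuous
  let S := {t : ℝ | dist (f (γ t)) (f x) ≤ K * dist x y * t}
  have hS : Icc 0 1 ⊆ S := by
    refine IsClosed.Icc_subset_of_forall_mem_nhdsWithin ?_ (by simp [S, γ]) ?_
    · exact (isClosed_le ((hcont.comp hγ).dist continuous_const)
        (continuous_const.mul continuous_id)).inter isClosed_Icc
    · rintro T ⟨hT, -⟩
      filter_upwards [nhdsWithin_le_nhds ((hγ.tendsto T).eventually (h (γ T))),
        self_mem_nhdsWithin] with t ht htT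
      have htT' : dist (γ t) (γ T) = (t - T) * dist x y := by
        rw [dist_lineMap_lineMap, Real.dist_eq, abs_of_pos (sub_pos.2 htT)]
      calc dist (f (γ t)) (f x) ≤ dist (f (γ t)) (f (γ T)) + dist (f (γ T)) (f x) :=
            dist_triangle _ _ _
        _ ≤ K * ((t - T) * dist x y) + K * dist x y * T := by
            rw [← htT']; exact add_le_add ht hT
        _ = K * dist x y * t := by ring
  simpa [S, γ, dist_comm x y] using hS ⟨zero_le_one, le_rfl⟩

theorem exists_continuousLinearMap_snd_le {E : Type*} [NormedAddCommGroup E] [NormedSpace ℝ E]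
    {C : Set (E × ℝ)} (hC : Convex ℝ C) (L : ℝ≥0) (hL : ∀ z ∈ C, z.2 ≤ L * ‖z.1‖) :
    ∃ w : E →L[ℝ] ℝ, ∀ z ∈ C, z.2 ≤ w z.1 := by
  rcases C.eq_empty_or_nonempty with rfl | ⟨z₀, hz₀⟩
  · exact ⟨0, by simp⟩
  -- separate `C` from the open cone `U`; `β < 0` below makes the hyperplane non-vertical
  let U := {z : E × ℝ | L * ‖z.1‖ < z.2}
  have hUopen : IsOpen U := isOpen_lt (by fun_prop) continuous_snd
  have hUconv : Convex ℝ U := by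
    simpa [U] using ((convexOn_norm convex_univ).smul L.2).convex_strict_epigraph
  have hdisj : Disjoint U C := disjoint_left.2 fun z hzU hzC => (hL z hzC).not_gt hzU
  obtain ⟨φ, u, hφU, hφC⟩ := geometric_hahn_banach_open hUconv hUopen hC hdisj
  set β := φ (0, 1)
  have hφ : ∀ d t, φ (d, t) = φ (d, 0) + t * β := fun d t => by
    rw [← smul_eq_mul, ← map_smul, ← map_add]; simp
  have hU : ∀ d, ∀ t > L * ‖d‖, φ (d, t) < u := fun d t ht => hφU (d, t) ht
  have hβ₀ : β ≤ 0 := by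
    by_contra! hβ
    have := hU 0 ((|u| + 1) / β) (by rw [norm_zero, mul_zero]; positivity)
    rw [hφ, Prod.mk_zero_zero, map_zero, zero_add, div_mul_cancel₀ _ hβ.ne'] at this
    linarith [le_abs_self u]
  have hβ : β < 0 := by
    refine hβ₀.lt_of_ne fun hβ => ?_
    have h₁ := hU z₀.1 (L * ‖z₀.1‖ + 1) (by linarith)
    have h₂ := hφC z₀ hz₀
    rw [hφ, hβ, mul_zero, add_zero] at h₁
    rw [← Prod.mk.eta (p := z₀), hφ, hβ, mul_zero, add_zero] at h₂
    linarith
  have hu : 0 ≤ u := by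
    by_contra! hu
    have := hU 0 (u / β) (by rw [norm_zero, mul_zero]; exact div_pos_of_neg_of_neg hu hβ)
    rw [hφ, Prod.mk_zero_zero, map_zero, zero_add, div_mul_cancel₀ _ hβ.ne] at this
    exact this.false
  refine ⟨(-β)⁻¹ • φ.comp (ContinuousLinearMap.inl ℝ E ℝ), fun z hz => ?_⟩
  have := hφC z hz
  rw [← Prod.mk.eta (p := z), hφ] at this
  change z.2 ≤ (-β)⁻¹ * φ (z.1, 0)
  rw [le_inv_mul_iff₀ (neg_pos.2 hβ)]
  nlinarith

theorem exists_affineMap_between {E : Type*} [NormedAddCommGroup E] [NormedSpace ℝ E]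
    {X Y : Set E} (hX : Convex ℝ X) (hY : Convex ℝ Y) {p : E → ℝ} {K : ℝ≥0}
    (hp : LipschitzWith K p) {f g : E →ᵃ[ℝ] ℝ} (hf : EqOn p f X) (hg : EqOn p g Y) :
    ∃ h : E →ᵃ[ℝ] ℝ, (∀ x ∈ X, f x ≤ h x) ∧ ∀ y ∈ Y, h y ≤ g y := by
  rcases X.eq_empty_or_nonempty with rfl | hXne
  · exact ⟨g, by simp, fun _ _ => le_rfl⟩
  rcases Y.eq_empty_or_nonempty with rfl | hYne
  · exact ⟨f, fun _ _ => le_rfl, by simp⟩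
  let C := {z : E × ℝ | ∃ x ∈ X, ∃ y ∈ Y, z.1 = x - y ∧ z.2 ≤ f x - g y}
  have hC : Convex ℝ C := by
    rintro _ ⟨x₁, hx₁, y₁, hy₁, hd₁, ht₁⟩ _ ⟨x₂, hx₂, y₂, hy₂, hd₂, ht₂⟩ a b ha hb hab
    refine ⟨a • x₁ + b • x₂, hX hx₁ hx₂ ha hb hab, a • y₁ + b • y₂, hY hy₁ hy₂ ha hb hab, ?_, ?_⟩
    · simp only [Prod.fst_add, Prod.smul_fst, hd₁, hd₂, smul_sub]
      abel
    · simp only [Prod.snd_add, Prod.smul_snd, smul_eq_mul, Convex.combo_affine_apply hab]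
      nlinarith
  have hCL : ∀ z ∈ C, z.2 ≤ K * ‖z.1‖ := by
    rintro z ⟨x, hx, y, hy, hd, ht⟩
    rw [hd, ← dist_eq_norm]
    refine ht.trans ?_
    rw [← hf hx, ← hg hy]
    exact ((le_abs_self _).trans (hp.dist_le_mul x y))
  obtain ⟨w, hw⟩ := exists_continuousLinearMap_snd_le hC K hCL
  have hsep : ∀ x ∈ X, ∀ y ∈ Y, f x - w x ≤ g y - w y := fun x hx y hy => by
    have := hw (x - y, f x - g y) ⟨x, hx, y, hy, rfl, le_rfl⟩
    rw [map_sub] at this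
    linarith
  obtain ⟨c, hc₁, hc₂⟩ := exists_between_of_forall_le (hXne.image fun x => f x - w x)
    (hYne.image fun y => g y - w y) (by rintro _ ⟨x, hx, rfl⟩ _ ⟨y, hy, rfl⟩; exact hsep x hx y hy)
  refine ⟨(w : E →ₗ[ℝ] ℝ).toAffineMap + AffineMap.const ℝ E c, fun x hx => ?_, fun y hy => ?_⟩
  all_goals simp only [AffineMap.coe_add, Pi.add_apply, LinearMap.coe_toAffineMap,
    ContinuousLinearMap.coe_coe, AffineMap.const_apply]
  · have : f x - w x ≤ c := hc₁ ⟨x, hx, rfl⟩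
    linarith
  · have : c ≤ g y - w y := hc₂ ⟨y, hy, rfl⟩
    linarith

theorem IsAffineFn.exists_affineMap {n : ℕ} {f : (Fin n → ℝ) → ℝ} (hf : IsAffineFn f) :
    ∃ A : (Fin n → ℝ) →ᵃ[ℝ] ℝ, ⇑A = f := by
  obtain ⟨a, c, hac⟩ := hf
  refine ⟨(∑ i, a i • LinearMap.proj i : (Fin n → ℝ) →ₗ[ℝ] ℝ).toAffineMap
    + AffineMap.const ℝ _ c, ?_⟩
  funext x
  simp [hac]

theorem IsPieceFamily.exists_maxMin {n q : ℕ} {p : (Fin n → ℝ) → ℝ}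
    {X : Fin q → Set (Fin n → ℝ)} (hX : IsPieceFamily p X) :
    ∃ g : Fin q → Fin q → (Fin n → ℝ) →ᵃ[ℝ] ℝ,
      ∀ x, (∀ i, ∃ j, g i j x ≤ p x) ∧ ∃ i, ∀ j, p x ≤ g i j x := by
  obtain ⟨⟨hcl, hcov, haff⟩, hconv⟩ := hX
  have hA : ∀ i, ∃ A : (Fin n → ℝ) →ᵃ[ℝ] ℝ, EqOn p A (X i) := fun i => by
    obtain ⟨f, hf, hpf⟩ := haff i
    obtain ⟨A, rfl⟩ := hf.exists_affineMap
    exact ⟨A, hpf⟩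
  choose A hA using hA
  choose K hK using fun i => (A i).lipschitzWith_of_finiteDimensional
  have hp : LipschitzWith (∑ i, K i) p := by
    refine lipschitzWith_of_eventually_dist_le fun z => ?_
    filter_upwards [eventually_exists_mem_and_mem hcl hcov z] with w ⟨i, hz, hw⟩
    rw [hA i hz, hA i hw]
    exact ((hK i).weaken (Finset.single_le_sum (fun _ _ => zero_le) (Finset.mem_univ i))).dist_le_mul
      w z
  choose g hg₁ hg₂ using fun i j => exists_affineMap_between (hconv i) (hconv j) hp (hA i) (hA j)
  refine ⟨g, fun x => ?_⟩
  obtain ⟨i₀, hi₀⟩ := mem_iUnion.1 (hcov ▸ mem_univ x : x ∈ ⋃ i, X i)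
  exact ⟨fun i => ⟨i₀, (hg₂ i i₀ x hi₀).trans (hA i₀ hi₀).ge⟩,
    i₀, fun j => (hA i₀ hi₀).le.trans (hg₁ i₀ j x hi₀)⟩

theorem AffineMap.toMatrix'_linear_mulVec_add {m n : ℕ} (A : (Fin m → ℝ) →ᵃ[ℝ] (Fin n → ℝ))
    (x : Fin m → ℝ) : (LinearMap.toMatrix' A.linear).mulVec x + A 0 = A x := by
  rw [LinearMap.toMatrix'_mulVec, A.decomp]
  simp

namespace ReLUNet

def hiddenWidths (N : ReLUNet) : List ℕ := List.ofFn fun i : Fin N.hidden => N.k (i + 1)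

theorem depth_eq (N : ReLUNet) : N.depth = N.hiddenWidths.length + 1 := by
  simp [depth, hiddenWidths]

theorem numHiddenNeurons_eq (N : ReLUNet) : N.numHiddenNeurons = N.hiddenWidths.sum := by
  rw [numHiddenNeurons, hiddenWidths, List.sum_ofFn,
    Fin.sum_univ_eq_sum_range (fun i => N.k (i + 1)), ← Finset.Ico_add_one_right_eq_Icc,
    Finset.sum_Ico_eq_sum_range]
  simp [add_comm]

theorem maxWidth_le_iff (N : ReLUNet) (B : ℕ) :
    N.maxWidth ≤ B ↔ ∀ w ∈ N.hiddenWidths, w ≤ B := by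
  simp only [maxWidth, hiddenWidths, Finset.sup_le_iff, Finset.mem_Icc, List.forall_mem_ofFn_iff]
  constructor
  · intro h i
    exact h _ ⟨by omega, by omega⟩
  · rintro h i ⟨hi₁, hi₂⟩
    obtain ⟨j, rfl⟩ := Nat.exists_eq_add_of_le' hi₁
    exact h ⟨j, by omega⟩

def ofAffine {m n : ℕ} (A : (Fin m → ℝ) →ᵃ[ℝ] (Fin n → ℝ)) : ReLUNet where
  hidden := 0
  k | 0 => m | _ + 1 => n
  W | 0 => LinearMap.toMatrix' A.linear | _ + 1 => 0
  b | 0 => A 0 | _ + 1 => 0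

def cons (N : ReLUNet) {m : ℕ} (A : (Fin m → ℝ) →ᵃ[ℝ] (Fin (N.k 0) → ℝ)) : ReLUNet where
  hidden := N.hidden + 1
  k | 0 => m | i + 1 => N.k i
  W | 0 => LinearMap.toMatrix' A.linear | i + 1 => N.W i
  b | 0 => A 0 | i + 1 => N.b i

theorem cons_layerOut_succ (N : ReLUNet) {m : ℕ} (A : (Fin m → ℝ) →ᵃ[ℝ] (Fin (N.k 0) → ℝ))
    (x : Fin m → ℝ) (i : ℕ) :
    (N.cons A).layerOut (i + 1) x = N.layerOut i fun j => relu (A x j) := by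
  induction i with
  | zero =>
    change (N.W 0).mulVec (fun j => relu ((LinearMap.toMatrix' A.linear).mulVec x j + A 0 j))
      + N.b 0 = _
    simp only [← Pi.add_apply, AffineMap.toMatrix'_linear_mulVec_add]
    rfl
  | succ i ih =>
    change (N.W (i + 1)).mulVec (fun j => relu ((N.cons A).layerOut (i + 1) x j)) + N.b (i + 1) = _
    rw [ih]
    rfl

end ReLUNet

def IsReLUNetFn : List ℕ → {ι κ : Type} → ((ι → ℝ) → κ → ℝ) → Prop
  | [], _, _, F => ∃ A : _ →ᵃ[ℝ] _, ⇑A = F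
  | k :: ws, _, _, F => ∃ (A : _ →ᵃ[ℝ] (Fin k → ℝ)) (G : (Fin k → ℝ) → _ → ℝ),
      IsReLUNetFn ws G ∧ F = fun x => G fun j => relu (A x j)

namespace IsReLUNetFn

variable {ι κ μ : Type}

theorem affine (A : (ι → ℝ) →ᵃ[ℝ] (κ → ℝ)) : IsReLUNetFn [] ⇑A := ⟨A, rfl⟩

theorem comp_affine {ws : List ℕ} {G : (κ → ℝ) → μ → ℝ} (hG : IsReLUNetFn ws G)
    (B : (ι → ℝ) →ᵃ[ℝ] (κ → ℝ)) : IsReLUNetFn ws (G ∘ B) := by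
  cases ws with
  | nil => obtain ⟨A, rfl⟩ := hG; exact ⟨A.comp B, rfl⟩
  | cons k ws => obtain ⟨A, H, hH, rfl⟩ := hG; exact ⟨A.comp B, H, hH, rfl⟩

theorem comp {ws₁ ws₂ : List ℕ} {F : (ι → ℝ) → κ → ℝ} {G : (κ → ℝ) → μ → ℝ}
    (hF : IsReLUNetFn ws₁ F) (hG : IsReLUNetFn ws₂ G) : IsReLUNetFn (ws₁ ++ ws₂) (G ∘ F) := by
  induction ws₁ generalizing ι F with
  | nil => obtain ⟨A, rfl⟩ := hF; exact hG.comp_affine A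
  | cons k ws₁ ih => obtain ⟨A, H, hH, rfl⟩ := hF; exact ⟨A, G ∘ H, ih hH, rfl⟩

theorem exists_reLUNet {ws : List ℕ} {m n : ℕ} {F : (Fin m → ℝ) → Fin n → ℝ}
    (hF : IsReLUNetFn ws F) : ∃ N : ReLUNet, N.Computes F ∧ N.hiddenWidths = ws := by
  induction ws generalizing m F with
  | nil =>
    obtain ⟨A, rfl⟩ := hF
    refine ⟨ReLUNet.ofAffine A, ⟨rfl, rfl, fun x j => ?_⟩, rfl⟩
    exact congrFun (A.toMatrix'_linear_mulVec_add x) j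
  | cons k ws ih =>
    obtain ⟨A, G, hG, rfl⟩ := hF
    obtain ⟨N, ⟨h₀, h₁, hN⟩, hw⟩ := ih hG
    subst h₀
    refine ⟨N.cons A, ⟨rfl, h₁, fun x j => ?_⟩, ?_⟩
    · exact (congrFun (N.cons_layerOut_succ A x N.hidden) j).trans (hN (fun j => relu (A x j)) j)
    · simp [ReLUNet.hiddenWidths, ReLUNet.cons, List.ofFn_succ, ← hw]

end IsReLUNetFn

theorem isReLUNetFn_shallow {ι κ H : Type} [Fintype H] (A : (ι → ℝ) →ᵃ[ℝ] (H → ℝ))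
    (B : (H → ℝ) →ᵃ[ℝ] (κ → ℝ)) :
    IsReLUNetFn [Fintype.card H] fun x => B fun h => relu (A x h) := by
  let e := Fintype.equivFin H
  refine ⟨(LinearMap.funLeft ℝ ℝ e.symm).toAffineMap.comp A,
    B.comp (LinearMap.funLeft ℝ ℝ e).toAffineMap, IsReLUNetFn.affine _, ?_⟩
  funext x
  refine congrArg B (funext fun h => ?_)
  simp [LinearMap.funLeft_apply]

theorem relu_sub_relu_neg (a : ℝ) : relu a - relu (-a) = a := by
  simp only [relu, max_comm 0 a, max_comm 0 (-a)]
  exact max_zero_sub_max_neg_zero_eq_self a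

theorem add_relu_sub (a b : ℝ) : a + relu (b - a) = max a b := by
  simp only [relu, add_max, add_zero, add_sub_cancel]

/-- Pairs entry `j` with entry `j + ⌈m/2⌉`. -/
def pairMax (m : ℕ) (v : Fin m → ℝ) (j : Fin ((m + 1) / 2)) : ℝ :=
  if h : (j : ℕ) < m / 2 then max (v ⟨j, by omega⟩) (v ⟨j + (m + 1) / 2, by omega⟩)
  else v ⟨j, by omega⟩

theorem pairMax_mem_range {m : ℕ} (v : Fin m → ℝ) (j : Fin ((m + 1) / 2)) :
    pairMax m v j ∈ range v := by
  unfold pairMax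
  split_ifs
  · rcases max_choice (v ⟨j, by omega⟩) (v ⟨j + (m + 1) / 2, by omega⟩) with h | h <;>
      · rw [h]; exact mem_range_self _
  · exact mem_range_self _

theorem exists_le_pairMax {m : ℕ} (v : Fin m → ℝ) (i : Fin m) :
    ∃ j, v i ≤ pairMax m v j := by
  by_cases hi : (i : ℕ) < (m + 1) / 2
  · refine ⟨⟨i, hi⟩, ?_⟩
    unfold pairMax
    split_ifs
    · exact le_max_left _ _
    · exact le_rfl
  · refine ⟨⟨i - (m + 1) / 2, by omega⟩, ?_⟩
    have hj : i - (m + 1) / 2 < m / 2 := by omega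
    have hi' : (⟨i - (m + 1) / 2 + (m + 1) / 2, by omega⟩ : Fin m) = i := Fin.ext (by simp; omega)
    simp only [pairMax, hj, dif_pos, hi']
    exact le_max_right _ _

theorem isReLUNetFn_pairMax (τ : Type) [Fintype τ] (m : ℕ) :
    IsReLUNetFn [Fintype.card τ * ((3 * m + 1) / 2)]
      fun (v : τ × Fin m → ℝ) (ij : τ × Fin ((m + 1) / 2)) =>
        pairMax m (fun j => v (ij.1, j)) ij.2 := by
  let first (j : ℕ) (hj : j < (m + 1) / 2) : Fin m := ⟨j, by omega⟩
  let second (j : Fin (m / 2)) : Fin m := ⟨j + (m + 1) / 2, by omega⟩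
  let π : τ × Fin m → (τ × Fin m → ℝ) →ₗ[ℝ] ℝ := LinearMap.proj
  let π' : τ × (Fin ((m + 1) / 2) × Bool ⊕ Fin (m / 2)) →
      ((τ × (Fin ((m + 1) / 2) × Bool ⊕ Fin (m / 2))) → ℝ) →ₗ[ℝ] ℝ := LinearMap.proj
  -- one neuron pair `relu (± a)` per first entry `a`, one neuron `relu (b - a)` per pair `(a, b)`
  let A : (τ × Fin m → ℝ) →ₗ[ℝ] (τ × (Fin ((m + 1) / 2) × Bool ⊕ Fin (m / 2)) → ℝ) :=
    LinearMap.pi fun ij : τ × (Fin ((m + 1) / 2) × Bool ⊕ Fin (m / 2)) => match ij with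
      | (i, .inl (j, s)) => (if s then 1 else -1 : ℝ) • π (i, first j j.2)
      | (i, .inr j) => π (i, second j) - π (i, first j (by omega))
  let B : (τ × (Fin ((m + 1) / 2) × Bool ⊕ Fin (m / 2)) → ℝ) →ₗ[ℝ] (τ × Fin ((m + 1) / 2) → ℝ) :=
    LinearMap.pi fun ij =>
      π' (ij.1, .inl (ij.2, true)) - π' (ij.1, .inl (ij.2, false)) +
        if h : (ij.2 : ℕ) < m / 2 then π' (ij.1, .inr ⟨ij.2, h⟩) else 0
  have hcard : Fintype.card (τ × (Fin ((m + 1) / 2) × Bool ⊕ Fin (m / 2)))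
      = Fintype.card τ * ((3 * m + 1) / 2) := by
    simp only [Fintype.card_prod, Fintype.card_sum, Fintype.card_bool, Fintype.card_fin]
    congr 1
    rcases Nat.even_or_odd' m with ⟨k, rfl | rfl⟩ <;> omega
  convert hcard ▸ isReLUNetFn_shallow A.toAffineMap B.toAffineMap using 1
  funext v ⟨i, j⟩
  unfold pairMax
  split_ifs with h
  all_goals simp [A, B, π, π', first, second, h, relu_sub_relu_neg, add_relu_sub]

def maxTreeWidths (m : ℕ) : List ℕ :=
  if h : m ≤ 1 then [] else (3 * m + 1) / 2 :: maxTreeWidths ((m + 1) / 2)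
decreasing_by omega

theorem exists_isReLUNetFn_maxTree (τ : Type) [Fintype τ] (m : ℕ) (hm : 0 < m) :
    ∃ T : (τ × Fin m → ℝ) → τ → ℝ,
      IsReLUNetFn ((maxTreeWidths m).map (Fintype.card τ * ·)) T ∧
        ∀ v i, IsGreatest (range fun j => v (i, j)) (T v i) := by
  induction m using Nat.strong_induction_on with
  | _ m ih =>
  by_cases hm₁ : m = 1
  · subst hm₁
    refine ⟨(LinearMap.funLeft ℝ ℝ fun i => (i, 0)).toAffineMap, ?_, fun v i => ?_⟩
    · rw [maxTreeWidths, dif_pos le_rfl]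
      exact IsReLUNetFn.affine _
    · refine ⟨mem_range_self 0, ?_⟩
      rintro _ ⟨j, rfl⟩
      rw [Subsingleton.elim j 0]
      rfl
  · obtain ⟨T, hT, hTmax⟩ := ih ((m + 1) / 2) (by omega) (by omega)
    refine ⟨T ∘ fun v ij => pairMax m (fun j => v (ij.1, j)) ij.2, ?_, fun v i => ⟨?_, ?_⟩⟩
    · rw [maxTreeWidths, dif_neg (by omega)]
      exact (isReLUNetFn_pairMax τ m).comp hT
    · obtain ⟨j, hj⟩ := (hTmax _ i).1
      rw [Function.comp_apply, ← hj]
      exact pairMax_mem_range _ j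
    · rintro _ ⟨j, rfl⟩
      obtain ⟨j', hj'⟩ := exists_le_pairMax (fun j => v (i, j)) j
      exact hj'.trans ((hTmax _ i).2 ⟨j', rfl⟩)

theorem length_maxTreeWidths (m : ℕ) : (maxTreeWidths m).length = Nat.clog 2 m := by
  induction m using Nat.strong_induction_on with
  | _ m ih =>
  rw [maxTreeWidths]
  split_ifs with hm
  · exact (Nat.clog_of_right_le_one hm 2).symm
  · rw [List.length_cons, ih ((m + 1) / 2) (by omega),
      Nat.clog_of_two_le one_lt_two (n := m) (by omega)]
    rfl

theorem sum_maxTreeWidths_add_three_le {m c : ℕ} (hm : m ≤ 2 ^ c) :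
    (maxTreeWidths m).sum + 3 ≤ 3 * 2 ^ c := by
  induction c generalizing m with
  | zero =>
    rw [maxTreeWidths, dif_pos (by simpa using hm)]
    simp
  | succ c ih =>
    rw [pow_succ] at hm ⊢
    rw [maxTreeWidths]
    split_ifs with h
    · have := Nat.one_le_two_pow (n := c)
      rw [List.sum_nil]
      omega
    · have := ih (m := (m + 1) / 2) (by omega)
      rw [List.sum_cons]
      omega

theorem le_of_mem_maxTreeWidths {m w : ℕ} (hw : w ∈ maxTreeWidths m) : w ≤ (3 * m + 1) / 2 := by
  induction m using Nat.strong_induction_on with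
  | _ m ih =>
  rw [maxTreeWidths] at hw
  split_ifs at hw with hm
  · simp at hw
  · rcases List.mem_cons.1 hw with rfl | hw
    · exact le_rfl
    · exact (ih _ (by omega) hw).trans (by omega)

def maxMinWidths (q : ℕ) : List ℕ := (maxTreeWidths q).map (q * ·) ++ maxTreeWidths q

theorem length_maxMinWidths (q : ℕ) : (maxMinWidths q).length = 2 * Nat.clog 2 q := by
  simp [maxMinWidths, length_maxTreeWidths, two_mul]

theorem le_of_mem_maxMinWidths {q w : ℕ} (hw : w ∈ maxMinWidths q) :
    w ≤ (if 1 < q then 1 else 0) * ((3 * q + 1) / 2) * q := by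
  rcases Nat.lt_or_ge 1 q with hq | hq
  · rw [if_pos hq, one_mul]
    rcases List.mem_append.1 hw with hw | hw
    · obtain ⟨w', hw', rfl⟩ := List.mem_map.1 hw
      rw [mul_comm]
      exact Nat.mul_le_mul_right q (le_of_mem_maxTreeWidths hw')
    · exact (le_of_mem_maxTreeWidths hw).trans (Nat.le_mul_of_pos_right _ (by omega))
  · simp [maxMinWidths, maxTreeWidths, hq] at hw

theorem sum_maxMinWidths_le {q : ℕ} (hq : 0 < q) :
    (maxMinWidths q).sum ≤ (3 * 2 ^ Nat.clog 2 q + 2 * Nat.clog 2 q - 3) * q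
      + (3 * 2 ^ Nat.clog 2 q - 2 * Nat.clog 2 q - 3) := by
  have hS := sum_maxTreeWidths_add_three_le (Nat.le_pow_clog one_lt_two q)
  set c := Nat.clog 2 q
  have hc : c < 2 ^ c := Nat.lt_two_pow_self
  obtain ⟨D, hD⟩ : ∃ D, 3 * 2 ^ c = 2 * c + 3 + D := ⟨3 * 2 ^ c - 2 * c - 3, by omega⟩
  rw [maxMinWidths, List.sum_append, List.sum_map_mul_left, List.map_id', hD,
    show 2 * c + 3 + D + 2 * c - 3 = 4 * c + D by omega,
    show 2 * c + 3 + D - 2 * c - 3 = D by omega]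
  have hSD : (maxTreeWidths q).sum ≤ 2 * c + D := by omega
  nlinarith [Nat.mul_le_mul_left q hSD]

theorem exists_isReLUNetFn_maxMin {ι : Type} {q : ℕ} (hq : 0 < q)
    (g : Fin q → Fin q → (ι → ℝ) →ᵃ[ℝ] ℝ) :
    ∃ F : (ι → ℝ) → Fin 1 → ℝ, IsReLUNetFn (maxMinWidths q) F ∧
      ∀ x v, (∀ i, ∃ j, g i j x ≤ v) → (∃ i, ∀ j, v ≤ g i j x) → F x 0 = v := by
  obtain ⟨T₁, hT₁, hmax₁⟩ := exists_isReLUNetFn_maxTree (Fin q) q hq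
  obtain ⟨T₂, hT₂, hmax₂⟩ := exists_isReLUNetFn_maxTree (Fin 1) q hq
  -- the inner minima are computed as negated maxima
  let G : (ι → ℝ) →ᵃ[ℝ] (Fin q × Fin q → ℝ) := -AffineMap.pi fun ij => g ij.1 ij.2
  let R : (Fin q → ℝ) →ᵃ[ℝ] (Fin 1 × Fin q → ℝ) := -(LinearMap.funLeft ℝ ℝ Prod.snd).toAffineMap
  have hF := (((IsReLUNetFn.affine G).comp hT₁).comp (IsReLUNetFn.affine R)).comp hT₂
  simp only [List.nil_append, List.append_nil, Fintype.card_fin, one_mul, List.map_id'] at hF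
  have hG : ∀ x i j, G x (i, j) = -g i j x := fun _ _ _ => rfl
  have hR : ∀ w i, R w (0, i) = -w i := fun _ _ => rfl
  refine ⟨_, hF, fun x v hle hge => le_antisymm ?_ ?_⟩
  · obtain ⟨i, hi⟩ := (hmax₂ (R (T₁ (G x))) 0).1
    obtain ⟨j, hj⟩ := hle i
    have hij := (hmax₁ (G x) i).2 ⟨j, rfl⟩
    simp only [hR] at hi
    simp only [hG] at hij
    change T₂ (R (T₁ (G x))) 0 ≤ v
    linarith
  · obtain ⟨i, hi⟩ := hge
    obtain ⟨j, hj⟩ := (hmax₁ (G x) i).1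
    have hi' := (hmax₂ (R (T₁ (G x))) 0).2 ⟨i, rfl⟩
    simp only [hR] at hi'
    simp only [hG] at hj
    change v ≤ T₂ (R (T₁ (G x))) 0
    linarith [hi j]

/-- **Theorem 1.** Any CPWL function `p : ℝⁿ → ℝ` with `q` pieces can be represented by a ReLU
network whose number of layers `l`, maximum width `w`, and number of hidden neurons `h` satisfy
`l ≤ 2⌈log₂ q⌉ + 1`, `w ≤ 𝟙[q > 1]·⌈3q/2⌉·q`, and
`h ≤ (3·2^⌈log₂ q⌉ + 2⌈log₂ q⌉ − 3)·q + 3·2^⌈log₂ q⌉ − 2⌈log₂ q⌉ − 3`. -/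
theorem cpwl_relu_upper_bound_pieces (n q : ℕ) (p : (Fin n → ℝ) → ℝ) (hq : HasPieces p q) :
    ∃ N : ReLUNet, N.ComputesScalar p ∧
      N.depth ≤ 2 * Nat.clog 2 q + 1 ∧
      N.maxWidth ≤ (if 1 < q then 1 else 0) * ((3 * q + 1) / 2) * q ∧
      N.numHiddenNeurons ≤
        (3 * 2 ^ Nat.clog 2 q + 2 * Nat.clog 2 q - 3) * q
          + (3 * 2 ^ Nat.clog 2 q - 2 * Nat.clog 2 q - 3) := by
  obtain ⟨⟨X, hX⟩, -⟩ := hq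
  have hq₀ : 0 < q := Nat.pos_of_ne_zero fun h => by
    subst h
    exact empty_ne_univ (by simpa using hX.1.2.1)
  obtain ⟨g, hg⟩ := hX.exists_maxMin
  obtain ⟨F, hF, hFg⟩ := exists_isReLUNetFn_maxMin hq₀ g
  obtain ⟨N, ⟨h₀, h₁, hN⟩, hw⟩ := hF.exists_reLUNet
  refine ⟨N, ⟨h₀, h₁, fun x j => ?_⟩, ?_, ?_, ?_⟩
  · rw [hN, Subsingleton.elim (Fin.cast h₁ j) 0]
    exact hFg x _ (hg x).1 (hg x).2
  · rw [N.depth_eq, hw, length_maxMinWidths]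
  · exact (N.maxWidth_le_iff _).2 (hw ▸ fun w => le_of_mem_maxMinWidths)
  · exact N.numHiddenNeurons_eq ▸ hw ▸ sum_maxMinWidths_le hq₀
end

section
/- The sequence r defined on positive integers by r(1) = 0, r(k) = 3k/2 + r(k/2) if k is even, and r(k) = 2 + 3(k−1)/2 + r((k+1)/2) if k ≠ 1 is odd, is strictly increasing; that is, r(k) < r(k+1) for every positive integer k. -/
/-- **Lemma (strict monotonicity of `r`).** The sequence `r` defined by `r(1) = 0`,
`r(k) = 3k/2 + r(k/2)` for even `k`, and `r(k) = 2 + 3(k−1)/2 + r((k+1)/2)` for odd `k ≠ 1`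
is strictly increasing: `r(k) < r(k+1)` for every positive integer `k`. -/
theorem rseq_strictly_increasing (k : ℕ) (hk : 0 < k) : rseq k < rseq (k + 1) := by
  induction k using Nat.strong_induction_on with
  | _ k ih =>
    match k, hk with
    | 1, _ => simp [rseq]
    | (k + 2), _ =>
      rcases Nat.even_or_odd k with ⟨m, hm⟩ | ⟨m, hm⟩
      · subst hm
        have h1 : rseq (m + m + 2) = 3 * (m + 1) + rseq (m + 1) := by
          rw [rseq]
          have hc : (m + m + 2) % 2 = 0 := by omega
          have e1 : (m + m + 2) / 2 = m + 1 := by omega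
          rw [if_pos hc, e1]
        have h2 : rseq (m + m + 2 + 1) = 2 + 3 * (m + 1) + rseq (m + 2) := by
          have heq : m + m + 2 + 1 = (m + m + 1) + 2 := by omega
          rw [heq, rseq]
          have e1 : (m + m + 1 + 1) / 2 = m + 1 := by omega
          have e2 : (m + m + 1 + 3) / 2 = m + 2 := by omega
          simp only [if_neg (by omega : ¬ (m + m + 1 + 2) % 2 = 0), e1, e2]
        have hih : rseq (m + 1) < rseq (m + 2) := ih (m + 1) (by omega) (by omega)
        omega
      · subst hm
        have h1 : rseq (2 * m + 1 + 2) = 2 + 3 * (m + 1) + rseq (m + 2) := by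
          rw [rseq]
          have e1 : (2 * m + 1 + 1) / 2 = m + 1 := by omega
          have e2 : (2 * m + 1 + 3) / 2 = m + 2 := by omega
          simp only [if_neg (by omega : ¬ (2 * m + 1 + 2) % 2 = 0), e1, e2]
        have h2 : rseq (2 * m + 1 + 2 + 1) = 3 * (m + 2) + rseq (m + 2) := by
          have heq : 2 * m + 1 + 2 + 1 = (2 * m + 2) + 2 := by omega
          rw [heq, rseq]
          have hc : (2 * m + 2 + 2) % 2 = 0 := by omega
          have e1 : (2 * m + 2 + 2) / 2 = m + 2 := by omega
          rw [if_pos hc, e1]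
        omega
end

section
/- For any positive integer k, the sequence r defined by r(1) = 0, r(k) = 3k/2 + r(k/2) if k is even, and r(k) = 2 + 3(k−1)/2 + r((k+1)/2) if k ≠ 1 is odd, satisfies r(k) ≤ 3(2^⌈log₂ k⌉ − 1) < 6k − 3. -/
/-!
Both the recursion for `r` and `⌈log₂ k⌉` pass from `k` to `⌈k / 2⌉`, and in both branches of the
recursion the increment is at most `3⌈k / 2⌉`. Since `⌈k / 2⌉ ≤ 2^(⌈log₂ k⌉ - 1)`, induction gives
`r(k) ≤ 3(2^(c-1) + … + 2 + 1) = 3(2^c - 1)` with `c = ⌈log₂ k⌉`, and `2^c < 2k` yields the second bound.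
-/

theorem rseq_le_three_mul_add_rseq_ceil_half {k : ℕ} (hk : 2 ≤ k) :
    rseq k ≤ 3 * ((k + 1) / 2) + rseq ((k + 1) / 2) := by
  obtain ⟨n, rfl⟩ : ∃ n, k = n + 2 := ⟨k - 2, by omega⟩
  rw [rseq]
  split
  · rw [show (n + 2) / 2 = (n + 2 + 1) / 2 by omega]
  · rw [show (n + 3) / 2 = (n + 2 + 1) / 2 by omega]
    omega

theorem Nat.clog_two_eq_clog_two_half_add_one {k : ℕ} (hk : 2 ≤ k) :
    Nat.clog 2 k = Nat.clog 2 ((k + 1) / 2) + 1 :=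
  Nat.clog_of_two_le one_lt_two hk

theorem Nat.two_pow_clog_two_lt_two_mul {k : ℕ} (hk : 0 < k) : 2 ^ Nat.clog 2 k < 2 * k := by
  rcases (Nat.one_le_iff_ne_zero.mpr hk.ne').eq_or_lt with rfl | hk
  · simp
  · have hpred := Nat.pow_pred_clog_lt_self one_lt_two hk
    rw [← Nat.succ_pred_eq_of_pos (Nat.clog_pos one_lt_two hk), pow_succ]
    omega

theorem rseq_le_three_mul_two_pow_clog_sub_one (k : ℕ) :
    rseq k ≤ 3 * (2 ^ Nat.clog 2 k - 1) := by
  induction k using Nat.strong_induction_on with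
  | _ k ih =>
    rcases Nat.lt_or_ge k 2 with hk | hk
    · interval_cases k <;> simp [rseq]
    · have hstep := rseq_le_three_mul_add_rseq_ceil_half hk
      have hhalf := ih ((k + 1) / 2) (by omega)
      have hle := Nat.le_pow_clog one_lt_two ((k + 1) / 2)
      have hpos : 1 ≤ 2 ^ Nat.clog 2 ((k + 1) / 2) := Nat.one_le_two_pow
      rw [Nat.clog_two_eq_clog_two_half_add_one hk, pow_succ]
      omega

/-- **Lemma (upper bound for `r`).** For any positive integer `k`, the sequence `r` satisfies
`r(k) ≤ 3(2^⌈log₂ k⌉ − 1) < 6k − 3`. -/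
theorem rseq_upper_bound (k : ℕ) (hk : 0 < k) :
    rseq k ≤ 3 * (2 ^ Nat.clog 2 k - 1) ∧ 3 * (2 ^ Nat.clog 2 k - 1) < 6 * k - 3 := by
  refine ⟨rseq_le_three_mul_two_pow_clog_sub_one k, ?_⟩
  have hpow := Nat.two_pow_clog_two_lt_two_mul hk
  omega
end

section
/- Let p : ℝⁿ → ℝ be CPWL and let {X_i}_{i∈[I]} be a family of closed connected subsets of ℝⁿ covering ℝⁿ with p affine on each X_i (with affine function f_i agreeing with p on X_i), where I is the minimum cardinality among all such families of closed connected subsets. Then for any i, j ∈ [I] with i ≠ j and X_i ∩ X_j ≠ ∅, the affine functions f_i and f_j are different, and the set {x ∈ ℝⁿ : f_i(x) = f_j(x)} is a nonempty affine subspace of ℝⁿ of dimension n − 1. -/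
/-- **Lemma (intersecting pieces have different components meeting in a hyperplane).** Let
`{X_i}_{i∈[I]}` be a minimal family of closed connected subsets for the CPWL function `p`,
with `f_i` the affine function agreeing with `p` on `X_i`. For any `i ≠ j` with
`X_i ∩ X_j ≠ ∅`, the functions `f_i` and `f_j` are different, and
`{x : f_i(x) = f_j(x)}` is a nonempty affine subspace of `ℝⁿ` of dimension `n − 1`. -/
theorem intersecting_pieces_hyperplane (n I : ℕ) (p : (Fin n → ℝ) → ℝ)
    (X : Fin I → Set (Fin n → ℝ)) (hmin : IsMinConnFamily p X)
    (f : Fin I → (Fin n → ℝ) → ℝ)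
    (hf : ∀ i, IsAffineFn (f i)) (hfp : ∀ i, ∀ x ∈ X i, p x = f i x)
    (i j : Fin I) (hij : i ≠ j) (hint : (X i ∩ X j).Nonempty) :
    f i ≠ f j ∧ {x | f i x = f j x}.Nonempty ∧
      ∃ E : AffineSubspace ℝ (Fin n → ℝ),
        (E : Set (Fin n → ℝ)) = {x | f i x = f j x} ∧
        Module.finrank ℝ E.direction = n - 1 := by
    classical
  obtain ⟨x₀, hxi, hxj⟩ := hint
  obtain ⟨a, c, ha⟩ := hf i
  obtain ⟨a', c', ha'⟩ := hf j
  have hx₀ : f i x₀ = f j x₀ := by rw [← hfp i x₀ hxi, ← hfp j x₀ hxj]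
  -- Part 1: f i ≠ f j
  have hne : f i ≠ f j := by
    intro heq
    have hI : 0 < I := i.pos
    obtain ⟨m, rfl⟩ : ∃ m, I = m + 1 := ⟨I - 1, by omega⟩
    obtain ⟨⟨hcl, hc, hcov, haff⟩, hle⟩ := hmin
    set Y : Fin m → Set (Fin n → ℝ) := fun k =>
      if j.succAbove k = i then X i ∪ X j else X (j.succAbove k) with hY
    have hYfam : IsConnFamily p Y := by
      refine ⟨?_, ?_, ?_, ?_⟩
      · intro k; dsimp only [Y]; split
        · exact (hcl i).union (hcl j)
        · exact hcl _
      · intro k; dsimp only [Y]; split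
        · exact (hc i).union ⟨x₀, hxi, hxj⟩ (hc j)
        · exact hc _
      · apply Set.eq_univ_of_forall
        intro x
        have hx : x ∈ ⋃ l, X l := by rw [hcov]; exact Set.mem_univ x
        obtain ⟨l, hl⟩ := Set.mem_iUnion.mp hx
        by_cases hlj : l = j
        · obtain ⟨k, hk⟩ := Fin.exists_succAbove_eq hij
          refine Set.mem_iUnion.mpr ⟨k, ?_⟩
          simp only [Y, hk, if_pos rfl]
          exact Or.inr (hlj ▸ hl)
        · obtain ⟨k, hk⟩ := Fin.exists_succAbove_eq hlj
          refine Set.mem_iUnion.mpr ⟨k, ?_⟩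
          by_cases hki : j.succAbove k = i
          · simp only [Y, hki, if_pos rfl]
            exact Or.inl ((hk.symm.trans hki) ▸ hl)
          · simp only [Y, hki, if_neg hki, hk]; exact hl
      · intro k; dsimp only [Y]; split
        · refine ⟨f i, ⟨a, c, ha⟩, ?_⟩
          rintro x (hx | hx)
          · exact hfp i x hx
          · rw [hfp j x hx, heq]
        · exact haff _
    have := hle m Y hYfam
    omega
  refine ⟨hne, ⟨x₀, hx₀⟩, ?_⟩
  -- Part 2: the equality set is a hyperplane
  have haa' : a ≠ a' := by
    intro h
    apply hne
    have hcc : c = c' := by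
      have h0 := hx₀
      rw [ha, ha', h] at h0
      linarith
    funext x; rw [ha, ha', h, hcc]
  obtain ⟨k0, hk0⟩ := Function.ne_iff.mp haa'
  set ℓ : (Fin n → ℝ) →ₗ[ℝ] ℝ := ∑ k, (a k - a' k) • LinearMap.proj k with hℓ
  have hℓapp : ∀ x, ℓ x = ∑ k, (a k - a' k) * x k := by
    intro x
    simp [hℓ, LinearMap.proj_apply, smul_eq_mul]
  have hsum : ∀ x : Fin n → ℝ, (∑ k, (a k - a' k) * x k)
      = (∑ k, a k * x k) - ∑ k, a' k * x k := by
    intro x; rw [← Finset.sum_sub_distrib]; exact Finset.sum_congr rfl fun k _ => by ring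
  have hx0e : (∑ k, a k * x₀ k) + c = (∑ k, a' k * x₀ k) + c' := by
    have h0 := hx₀; rwa [ha, ha'] at h0
  have hset : ∀ x, (f i x = f j x) ↔ ℓ x = ℓ x₀ := by
    intro x
    rw [ha, ha', hℓapp, hℓapp, hsum, hsum]
    constructor <;> intro h <;> linarith
  have hℓsingle : ℓ (Pi.single k0 1) = a k0 - a' k0 := by
    rw [hℓapp]
    rw [Finset.sum_eq_single k0]
    · simp
    · intro b _ hb; simp [Pi.single_eq_of_ne hb]
    · simp
  have hsub0 : a k0 - a' k0 ≠ 0 := sub_ne_zero.mpr hk0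
  have hrange : LinearMap.range ℓ = ⊤ := by
    rw [eq_top_iff]
    rintro y -
    refine ⟨(y / (a k0 - a' k0)) • (Pi.single k0 1 : Fin n → ℝ), ?_⟩
    rw [map_smul, hℓsingle, smul_eq_mul]
    field_simp
  refine ⟨AffineSubspace.mk' x₀ (LinearMap.ker ℓ), ?_, ?_⟩
  · ext x
    rw [AffineSubspace.mem_coe, AffineSubspace.mem_mk', Set.mem_setOf_eq, hset]
    constructor <;> intro h
    · have : ℓ (x -ᵥ x₀) = 0 := h
      rw [vsub_eq_sub, map_sub, sub_eq_zero] at this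
      exact this
    · show ℓ (x -ᵥ x₀) = 0
      rw [vsub_eq_sub, map_sub, sub_eq_zero]
      exact h
  · rw [AffineSubspace.direction_mk']
    have hfr := LinearMap.finrank_range_add_finrank_ker ℓ
    rw [hrange, finrank_top, Module.finrank_self] at hfr
    have hpi : Module.finrank ℝ (Fin n → ℝ) = n := by
      simp [Module.finrank_pi]
    rw [hpi] at hfr
    omega
end

section
/- Let p : ℝⁿ → ℝ be CPWL and let {X_i}_{i∈[I]} be a family of closed connected subsets of ℝⁿ covering ℝⁿ with p affine on each X_i, where I is the minimum cardinality among all such families of closed connected subsets. Then for every i ∈ [I], the topological interior of X_i is nonempty. -/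
/-- **Lemma (nonempty interiors).** Let `{X_i}_{i∈[I]}` be a minimal family of closed connected
subsets for the CPWL function `p`. Then every `X_i` has nonempty interior. -/
theorem pieces_nonempty_interior (n I : ℕ) (p : (Fin n → ℝ) → ℝ)
    (X : Fin I → Set (Fin n → ℝ)) (hmin : IsMinConnFamily p X) :
    ∀ i, (interior (X i)).Nonempty := by
  intro i
  by_contra h
  rw [Set.not_nonempty_iff_eq_empty] at h
  obtain ⟨⟨hcl, hconn, hcov, haff⟩, hmin2⟩ := hmin
  rcases I with _ | m
  · exact i.elim0
  set Y : Fin m → Set (Fin n → ℝ) := fun j => X (i.succAbove j) with hY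
  have hclosed : IsClosed (⋃ j, Y j) := isClosed_iUnion_of_finite fun j => hcl _
  have hdense : Dense ((X i)ᶜ) := by
    rwa [interior_eq_empty_iff_dense_compl] at h
  have hsub : (X i)ᶜ ⊆ ⋃ j, Y j := by
    intro x hx
    have hx' : x ∈ ⋃ j, X j := hcov ▸ Set.mem_univ x
    obtain ⟨j, hj⟩ := Set.mem_iUnion.1 hx'
    have hji : j ≠ i := fun e => hx (e ▸ hj)
    obtain ⟨k, hk⟩ := Fin.exists_succAbove_eq hji
    exact Set.mem_iUnion.2 ⟨k, by simpa [hY, hk] using hj⟩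
  have hYcov : (⋃ j, Y j) = Set.univ := by
    rw [← hclosed.closure_eq]
    exact (hdense.mono hsub).closure_eq
  have : m + 1 ≤ m :=
    hmin2 m Y ⟨fun j => hcl _, fun j => hconn _, hYcov, fun j => haff _⟩
  omega
end
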